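/- There exist constants c1, c2 > 0 such that for all n, k in [n], and epsilon > 0 with m <= k - 2*log2(1/epsilon) - c1 and k >= log2(log2(n)) + 2*log2(1/epsilon) + c1, a uniformly random function f : {0,1}^n -> {0,1}^m is an adaptive (k,epsilon)-ERF with probability at least 1 - 2^{-c2 * 2^n * epsilon^2}. -/

import Mathlib

/-- Binary decision trees over `n` input bits with outputs in `α` at the leaves. -/
inductive DTree (n : ℕ) (α : Type) : Type
  | leaf : α → DTree n α
  | node : Fin n → DTree n α → DTree n α → DTree n α

/-- The output of an adaptive adversary given by a decision tree on input `w`. -/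
def DTree.eval {n : ℕ} {α : Type} : DTree n α → (Fin n → Bool) → α
  | .leaf a, _ => a
  | .node i t0 t1, w => if w i then t1.eval w else t0.eval w

/-- The depth of a decision tree (the maximum number of bits read). -/
def DTree.depth {n : ℕ} {α : Type} : DTree n α → ℕ
  | .leaf _ => 0
  | .node _ t0 t1 => max t0.depth t1.depth + 1

/-!
An adversary of depth `d = n - k` sees only its transcript, a bit string of length at most `d`
determined by the shape of its tree, and its output is a function of that transcript. So every
event about `(A(w), y)` is an event `(transcript s w, y) ∈ S` for one of at most
`n ^ (3 * 2 ^ d)` shapes `s` and `2 ^ (2 ^ (d + 1 + m))` sets `S`. For a fixed test, `2ⁿ` times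
the advantage of `f` is a sum over `w` of the independent centred `[0, 1]`-valued variables
`f ↦ 1[(transcript s w, f w) ∈ S] - P_y[(transcript s w, y) ∈ S]`, so by Hoeffding its
absolute value reaches `ε 2ⁿ` with probability at most `2 exp (-2 · 2ⁿ ε²)`. The hypotheses on
`m` and `k` make the union bound over all tests at most `2 ^ (-2ⁿ ε²)`.
-/

open Finset MeasureTheory ProbabilityTheory Real

lemma ProbabilityTheory.HasSubgaussianMGF.measure_abs_ge_le {Ω : Type*} {_ : MeasurableSpace Ω}
    {μ : Measure Ω} [IsFiniteMeasure μ] {X : Ω → ℝ} {c : NNReal}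
    (h : HasSubgaussianMGF X c μ) {ε : ℝ} (hε : 0 ≤ ε) :
    μ.real {ω | ε ≤ |X ω|} ≤ 2 * exp (-ε ^ 2 / (2 * c)) := by
  have hsub : {ω | ε ≤ |X ω|} ⊆ {ω | ε ≤ X ω} ∪ {ω | ε ≤ (-X) ω} := fun ω (hω : ε ≤ |X ω|) => by
    rcases le_abs'.1 hω with h | h
    · exact Or.inr (by simp only [Set.mem_ofPred_eq, Pi.neg_apply]; linarith)
    · exact Or.inl h
  calc μ.real {ω | ε ≤ |X ω|} ≤ μ.real {ω | ε ≤ X ω} + μ.real {ω | ε ≤ (-X) ω} :=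
        (measureReal_mono hsub).trans (measureReal_union_le _ _)
    _ ≤ 2 * exp (-ε ^ 2 / (2 * c)) := by
        linarith [h.measure_ge_le hε, h.neg.measure_ge_le hε]

lemma measureReal_uniformOn_univ {α : Type*} [Fintype α] [MeasurableSpace α]
    [MeasurableSingletonClass α] (p : α → Prop) [DecidablePred p] :
    (uniformOn (Set.univ : Set α)).real {x | p x} = #{x | p x} / Fintype.card α := by
  have : {x | p x} = ((univ.filter p : Finset α) : Set α) := by simp
  rw [measureReal_def, uniformOn_univ, this, Measure.count_apply_finset, ENNReal.toReal_div]
  simp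

lemma exp_neg_le_two_rpow_neg {x : ℝ} (hx : 0 ≤ x) : exp (-x) ≤ 2 ^ (-x) := by
  rw [Real.rpow_def_of_pos two_pos]
  gcongr
  nlinarith [Real.log_two_lt_d9]

section Deviation

variable {W Y : Type*} [Fintype W] [Fintype Y]

noncomputable def deviation (A : W → Y → Prop) [∀ w y, Decidable (A w y)] (f : W → Y) : ℝ :=
  ∑ w, ((if A w (f w) then 1 else 0) - (#{y | A w y} : ℝ) / Fintype.card Y)

lemma card_div_sub_card_div_eq_deviation_div [Nonempty Y] (A : W → Y → Prop)
    [∀ w y, Decidable (A w y)] (f : W → Y) :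
    (#{wy : W × Y | A wy.1 (f wy.1)} : ℝ) / Fintype.card (W × Y)
      - (#{wy : W × Y | A wy.1 wy.2} : ℝ) / Fintype.card (W × Y)
      = deviation A f / Fintype.card W := by
  have hY : (Fintype.card Y : ℝ) ≠ 0 := by positivity
  have hfst : (#{wy : W × Y | A wy.1 (f wy.1)} : ℝ)
      = Fintype.card Y * ∑ w, if A w (f w) then 1 else 0 := by
    rw [card_filter, Fintype.sum_prod_type]
    simp only [sum_const, card_univ, nsmul_eq_mul, Nat.cast_sum, Nat.cast_ite, Nat.cast_one,
      Nat.cast_zero, mul_sum]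
  have hboth : (#{wy : W × Y | A wy.1 wy.2} : ℝ) = ∑ w, (#{y | A w y} : ℝ) := by
    simp only [card_filter, Fintype.sum_prod_type, Nat.cast_sum]
  rw [hfst, hboth, deviation, sum_sub_distrib, ← sum_div, Fintype.card_prod, Nat.cast_mul]
  field_simp

variable [Nonempty Y] [MeasurableSpace Y] [DiscreteMeasurableSpace Y]

lemma measureReal_abs_deviation_ge_le (A : W → Y → Prop) [∀ w y, Decidable (A w y)]
    {a : ℝ} (ha : 0 ≤ a) :
    (uniformOn (Set.univ : Set (W → Y))).real {f | a ≤ |deviation A f|} ≤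
      2 * exp (-2 * a ^ 2 / Fintype.card W) := by
  set μ : Measure (W → Y) := uniformOn Set.univ
  set g : W → Y → ℝ := fun w y => if A w y then 1 else 0
  set q : W → ℝ := fun w => (#{y | A w y} : ℝ) / Fintype.card Y
  have hμ : μ = Measure.pi fun _ => uniformOn Set.univ := by
    rw [← uniformOn_pi, Set.pi_univ]
  have hmean : ∀ w, μ[fun f => g w (f w)] = q w := by
    intro w
    have : (fun f : W → Y => g w (f w)) = (Function.eval w ⁻¹' {y | A w y}).indicator 1 := by
      ext f; simp [g, Set.indicator_apply]
    rw [this, integral_indicator_one (.of_discrete), hμ,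
      (measurePreserving_eval (fun _ : W => (uniformOn Set.univ : Measure Y)) w
        ).measureReal_preimage MeasurableSet.of_discrete.nullMeasurableSet,
      measureReal_uniformOn_univ]
  have hindep : iIndepFun (fun w f => g w (f w) - q w) μ := by
    rw [hμ]
    exact iIndepFun_pi (X := fun w y => g w y - q w)
      fun _ => (measurable_of_countable _).aemeasurable
  have hsubG : ∀ w ∈ (univ : Finset W),
      HasSubgaussianMGF (fun f => g w (f w) - q w) ((‖(1:ℝ) - 0‖₊ / 2) ^ 2) μ := by
    intro w _
    rw [← hmean w]
    refine hasSubgaussianMGF_of_mem_Icc (measurable_of_countable _).aemeasurable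
      (ae_of_all _ fun f => ?_)
    by_cases h : A w (f w) <;> simp [g, h]
  convert (HasSubgaussianMGF.sum_of_iIndepFun hindep hsubG).measure_abs_ge_le ha using 2
  · rfl
  · norm_num [card_univ]
    ring

lemma one_sub_card_mul_le_measureReal_forall_abs_deviation_le {ι : Type*} (s : Finset ι)
    (A : ι → W → Y → Prop) [∀ i w y, Decidable (A i w y)] {a : ℝ} (ha : 0 ≤ a) :
    1 - #s * (2 * exp (-2 * a ^ 2 / Fintype.card W)) ≤
      (uniformOn (Set.univ : Set (W → Y))).real {f | ∀ i ∈ s, |deviation (A i) f| ≤ a} := by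
  set μ : Measure (W → Y) := uniformOn Set.univ
  have hbad : {f | ∀ i ∈ s, |deviation (A i) f| ≤ a}ᶜ ⊆
      ⋃ i ∈ s, {f | a ≤ |deviation (A i) f|} := fun f hf => by
    simp only [Set.mem_compl_iff, Set.mem_ofPred_eq, not_forall, not_le] at hf
    obtain ⟨i, hi, h⟩ := hf
    exact Set.mem_biUnion hi h.le
  calc 1 - #s * (2 * exp (-2 * a ^ 2 / Fintype.card W))
      ≤ 1 - μ.real {f | ∀ i ∈ s, |deviation (A i) f| ≤ a}ᶜ := by
        gcongr
        calc μ.real {f | ∀ i ∈ s, |deviation (A i) f| ≤ a}ᶜ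
            ≤ ∑ i ∈ s, μ.real {f | a ≤ |deviation (A i) f|} :=
              (measureReal_mono hbad (measure_ne_top _ _)).trans (measureReal_biUnion_finset_le _ _)
          _ ≤ #s * (2 * exp (-2 * a ^ 2 / Fintype.card W)) := by
              rw [← nsmul_eq_mul, ← sum_const]
              exact sum_le_sum fun i _ => measureReal_abs_deviation_ge_le (A i) ha
    _ = μ.real {f | ∀ i ∈ s, |deviation (A i) f| ≤ a} := by
        rw [probReal_compl_eq_one_sub .of_discrete]
        ring

end Deviation

namespace DTree

variable {n : ℕ} {α : Type}

def transcript : DTree n α → (Fin n → Bool) → List Bool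
  | .leaf _, _ => []
  | .node i t0 t1, w => w i :: if w i then t1.transcript w else t0.transcript w

def shape : DTree n α → DTree n Unit
  | .leaf _ => .leaf ()
  | .node i t0 t1 => .node i t0.shape t1.shape

@[simp]
lemma depth_shape (T : DTree n α) : T.shape.depth = T.depth := by
  induction T with
  | leaf => rfl
  | node i t0 t1 h0 h1 => simp [shape, depth, h0, h1]

@[simp]
lemma transcript_shape (T : DTree n α) : T.shape.transcript = T.transcript := by
  induction T with
  | leaf => rfl
  | node i t0 t1 h0 h1 => ext1 w; simp [shape, transcript, h0, h1]

lemma length_transcript_le_depth (T : DTree n α) (w : Fin n → Bool) :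
    (T.transcript w).length ≤ T.depth := by
  induction T with
  | leaf => simp [transcript, depth]
  | node i t0 t1 h0 h1 => by_cases h : w i <;> simp [transcript, depth, h] <;> omega

lemma exists_eval_eq_comp_transcript (T : DTree n α) :
    ∃ r : List Bool → α, ∀ w, T.eval w = r (T.transcript w) := by
  induction T with
  | leaf a => exact ⟨fun _ => a, fun _ => rfl⟩
  | node i t0 t1 h0 h1 =>
    obtain ⟨r0, hr0⟩ := h0
    obtain ⟨r1, hr1⟩ := h1
    refine ⟨fun | [] => r0 [] | b :: p => if b then r1 p else r0 p, fun w => ?_⟩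
    by_cases h : w i <;> simp [eval, transcript, h, hr0, hr1]

end DTree

open Classical in
noncomputable def shapesOfDepthLE (n : ℕ) : ℕ → Finset (DTree n Unit)
  | 0 => {.leaf ()}
  | d + 1 => insert (.leaf ())
      ((univ ×ˢ shapesOfDepthLE n d ×ˢ shapesOfDepthLE n d).image fun p => .node p.1 p.2.1 p.2.2)

lemma mem_shapesOfDepthLE {n d : ℕ} {s : DTree n Unit} (hs : s.depth ≤ d) :
    s ∈ shapesOfDepthLE n d := by
  induction s generalizing d with
  | leaf => cases d <;> simp [shapesOfDepthLE]
  | node i t0 t1 h0 h1 =>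
    obtain ⟨d, rfl⟩ : ∃ d', d = d' + 1 :=
      Nat.exists_eq_add_one.2 (by simp [DTree.depth] at hs; omega)
    simp only [DTree.depth, add_le_add_iff_right, max_le_iff] at hs
    simp only [shapesOfDepthLE, mem_insert, mem_image, mem_product, mem_univ, true_and]
    exact Or.inr ⟨(i, t0, t1), ⟨h0 hs.1, h1 hs.2⟩, rfl⟩

lemma card_shapesOfDepthLE_le (n d : ℕ) :
    #(shapesOfDepthLE n d) ≤ (2 * n + 2) ^ (2 ^ d - 1) := by
  induction d with
  | zero => simp [shapesOfDepthLE]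
  | succ d ih =>
    classical
    have hX : 1 ≤ (2 * n + 2) ^ (2 ^ d - 1) := Nat.one_le_pow _ _ (by omega)
    have hexp : 2 ^ (d + 1) - 1 = 2 * (2 ^ d - 1) + 1 := by
      have := Nat.one_le_two_pow (n := d); rw [pow_succ]; omega
    calc #(shapesOfDepthLE n (d + 1))
        ≤ 1 + n * (#(shapesOfDepthLE n d) * #(shapesOfDepthLE n d)) := by
          rw [shapesOfDepthLE]
          refine (card_insert_le _ _).trans ?_
          rw [add_comm]
          gcongr
          refine card_image_le.trans_eq ?_
          rw [card_product, card_product, card_univ, Fintype.card_fin]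
      _ ≤ 1 + n * ((2 * n + 2) ^ (2 ^ d - 1) * (2 * n + 2) ^ (2 ^ d - 1)) := by gcongr
      _ ≤ (2 * n + 2) * ((2 * n + 2) ^ (2 ^ d - 1) * (2 * n + 2) ^ (2 ^ d - 1)) := by nlinarith
      _ = (2 * n + 2) ^ (2 ^ (d + 1) - 1) := by rw [hexp, pow_succ, pow_mul']; ring

lemma card_shapesOfDepthLE_le_pow {n d : ℕ} (hd : d < n) :
    #(shapesOfDepthLE n d) ≤ n ^ (3 * 2 ^ d) := by
  rcases Nat.lt_or_ge n 2 with hn | hn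
  · obtain rfl : d = 0 := by omega
    simp [shapesOfDepthLE, Nat.one_le_iff_ne_zero]; omega
  calc #(shapesOfDepthLE n d) ≤ (2 * n + 2) ^ (2 ^ d - 1) := card_shapesOfDepthLE_le n d
    _ ≤ (n ^ 3) ^ (2 ^ d) :=
      (Nat.pow_le_pow_left (by nlinarith [Nat.mul_le_mul hn hn]) _).trans
        (Nat.pow_le_pow_right (by positivity) (Nat.sub_le _ _))
    _ = n ^ (3 * 2 ^ d) := by rw [← pow_mul]

def listsOfLengthLE : ℕ → Finset (List Bool)
  | 0 => {[]}
  | d + 1 => insert [] ((univ ×ˢ listsOfLengthLE d).image fun p => p.1 :: p.2)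

lemma mem_listsOfLengthLE {d : ℕ} {p : List Bool} (hp : p.length ≤ d) :
    p ∈ listsOfLengthLE d := by
  induction p generalizing d with
  | nil => cases d <;> simp [listsOfLengthLE]
  | cons b p ih =>
    obtain ⟨d, rfl⟩ : ∃ d', d = d' + 1 := Nat.exists_eq_add_one.2 (by simp at hp; omega)
    simp only [listsOfLengthLE, mem_insert, mem_image, mem_product, mem_univ, true_and]
    exact Or.inr ⟨(b, p), ih (by simpa using hp), rfl⟩

lemma card_listsOfLengthLE_lt (d : ℕ) : #(listsOfLengthLE d) < 2 ^ (d + 1) := by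
  induction d with
  | zero => simp [listsOfLengthLE]
  | succ d ih =>
    calc #(listsOfLengthLE (d + 1)) ≤ 1 + 2 * #(listsOfLengthLE d) := by
          rw [listsOfLengthLE]
          refine (card_insert_le _ _).trans ?_
          rw [add_comm]
          gcongr
          exact card_image_le.trans (by simp)
      _ < 2 ^ (d + 1 + 1) := by rw [pow_succ]; omega

lemma DTree.exists_mem_shapesOfDepthLE_transcript_iff {n d : ℕ} {α β : Type} [Fintype β]
    (T : DTree n α) (hT : T.depth ≤ d) (P : α → β → Prop) :
    ∃ s ∈ shapesOfDepthLE n d, ∃ S ∈ (listsOfLengthLE d ×ˢ (univ : Finset β)).powerset,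
      ∀ w y, P (T.eval w) y ↔ (s.transcript w, y) ∈ S := by
  classical
  obtain ⟨r, hr⟩ := T.exists_eval_eq_comp_transcript
  refine ⟨T.shape, mem_shapesOfDepthLE (by simpa using hT),
    (listsOfLengthLE d ×ˢ univ).filter fun p => P (r p.1) p.2, mem_powerset.2 (filter_subset _ _),
    fun w y => ?_⟩
  simp [hr, mem_listsOfLengthLE ((T.length_transcript_le_depth w).trans hT)]

-- The pair `(s, S)` stands for the test `w, y ↦ (s.transcript w, y) ∈ S`.
noncomputable def transcriptTests (n m d : ℕ) :
    Finset (DTree n Unit × Finset (List Bool × (Fin m → Bool))) :=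
  shapesOfDepthLE n d ×ˢ (listsOfLengthLE d ×ˢ univ).powerset

open Classical in
lemma iSup_advantage_le_of_forall_abs_deviation_le {n m d : ℕ} {ε : ℝ} (hε : 0 ≤ ε)
    {f : (Fin n → Bool) → (Fin m → Bool)}
    (hf : ∀ p ∈ transcriptTests n m d,
      |deviation (fun w y => (p.1.transcript w, y) ∈ p.2) f| ≤ ε * 2 ^ n)
    (T : DTree n (List Bool)) (hT : T.depth ≤ d) :
    (⨆ T' : Set (List Bool × (Fin m → Bool)),
        |((Finset.univ.filter fun wu : (Fin n → Bool) × (Fin m → Bool) =>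
              (T.eval wu.1, f wu.1) ∈ T').card : ℝ) / 2 ^ (n + m)
          - ((Finset.univ.filter fun wu : (Fin n → Bool) × (Fin m → Bool) =>
              (T.eval wu.1, wu.2) ∈ T').card : ℝ) / 2 ^ (n + m)|) ≤ ε := by
  refine Real.iSup_le (fun T' => ?_) hε
  obtain ⟨s, hs, S, hS, hiff⟩ :=
    T.exists_mem_shapesOfDepthLE_transcript_iff hT fun a y => (a, y) ∈ T'
  have hcard : (2 : ℝ) ^ (n + m) = Fintype.card ((Fin n → Bool) × (Fin m → Bool)) := by
    simp [pow_add]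
  simp only [hiff, hcard]
  rw [card_div_sub_card_div_eq_deviation_div (fun w y => (s.transcript w, y) ∈ S) f, abs_div]
  have hW : |(Fintype.card (Fin n → Bool) : ℝ)| = 2 ^ n := by simp
  rw [hW, div_le_iff₀ (by positivity)]
  exact hf (s, S) (mem_product.2 ⟨hs, hS⟩)

lemma card_transcriptTests_le {n m d : ℕ} (hd : d < n) :
    #(transcriptTests n m d) ≤ n ^ (3 * 2 ^ d) * 2 ^ (2 ^ (d + 1) * 2 ^ m) := by
  rw [transcriptTests, card_product, card_powerset, card_product, card_univ]
  gcongr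
  · exact card_shapesOfDepthLE_le_pow hd
  · exact one_le_two
  · exact (card_listsOfLengthLE_lt d).le
  · simp

lemma card_transcriptTests_le_two_rpow {n m d : ℕ} (hd : d < n) :
    (#(transcriptTests n m d) : ℝ) ≤ 2 ^ (3 * (2 ^ d * logb 2 n) + 2 * 2 ^ (d + m)) := by
  have hn : (0 : ℝ) < n := by exact_mod_cast hd.trans_le' (Nat.zero_le d)
  calc (#(transcriptTests n m d) : ℝ) ≤ (n : ℝ) ^ (3 * 2 ^ d) * 2 ^ (2 ^ (d + 1) * 2 ^ m) := by
        exact_mod_cast card_transcriptTests_le hd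
    _ = 2 ^ (3 * (2 ^ d * logb 2 n) + 2 * 2 ^ (d + m)) := by
        nth_rw 1 [← Real.rpow_logb two_pos one_lt_two.ne' hn]
        rw [← Real.rpow_mul_natCast two_pos.le, ← Real.rpow_natCast 2 (2 ^ (d + 1) * 2 ^ m),
          ← Real.rpow_add two_pos]
        push_cast
        ring_nf

lemma card_transcriptTests_mul_two_exp_le {n k m : ℕ} {ε : ℝ} (hk1 : 1 ≤ k) (hkn : k ≤ n)
    (hε : 0 < ε) (hm : (m : ℝ) ≤ k - 2 * logb 2 (1 / ε) - 3)
    (hk : logb 2 (logb 2 n) + 2 * logb 2 (1 / ε) + 3 ≤ k) :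
    (#(transcriptTests n m (n - k)) : ℝ) * (2 * exp (-(2 * (2 ^ n * ε ^ 2))))
      ≤ 2 ^ (-(2 ^ n * ε ^ 2)) := by
  set E := (2 : ℝ) ^ n * ε ^ 2
  have hL : logb 2 (1 / ε) = -logb 2 ε := by rw [one_div, Real.logb_inv]
  have hd : ((n - k : ℕ) : ℝ) = n - k := by push_cast [hkn]; ring
  have hE : ∀ u : ℝ, u ≤ n + 2 * logb 2 ε → 2 ^ u ≤ E := fun u hu => by
    calc (2 : ℝ) ^ u ≤ 2 ^ ((n : ℝ) + 2 * logb 2 ε) :=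
          Real.rpow_le_rpow_of_exponent_le one_le_two hu
      _ = E := by
        rw [Real.rpow_add two_pos, Real.rpow_natCast, mul_comm 2, Real.rpow_mul two_pos.le,
          Real.rpow_logb two_pos one_lt_two.ne' hε, Real.rpow_two]
  have h8 : (8 : ℝ) ≤ E := by
    have hkn' : (k : ℝ) ≤ n := Nat.cast_le.2 hkn
    convert hE 3 (by linarith [(Nat.cast_nonneg m : (0 : ℝ) ≤ m)])
    norm_num
  have hy : 8 * (2 : ℝ) ^ (n - k + m) ≤ E := by
    convert hE (3 + ((n - k + m : ℕ) : ℝ)) (by push_cast [hd]; linarith) using 1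
    rw [Real.rpow_add two_pos, Real.rpow_natCast]
    norm_num
  have hx : 8 * ((2 : ℝ) ^ (n - k) * logb 2 n) ≤ E := by
    have hn : (1 : ℝ) ≤ n := by exact_mod_cast hk1.trans hkn
    rcases (Real.logb_nonneg one_lt_two hn).eq_or_lt with h | h
    · rw [← h, mul_zero, mul_zero]; positivity
    convert hE (3 + ((n - k : ℕ) : ℝ) + logb 2 (logb 2 n)) (by rw [hd]; linarith) using 1
    rw [Real.rpow_add two_pos, Real.rpow_add two_pos, Real.rpow_natCast,
      Real.rpow_logb two_pos one_lt_two.ne' h]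
    norm_num
    ring
  set a := 3 * ((2 : ℝ) ^ (n - k) * logb 2 n) + 2 * 2 ^ (n - k + m) with ha
  calc (#(transcriptTests n m (n - k)) : ℝ) * (2 * exp (-(2 * E)))
      ≤ 2 ^ a * (2 * 2 ^ (-(2 * E))) := by
        gcongr
        · exact card_transcriptTests_le_two_rpow (by omega)
        · exact exp_neg_le_two_rpow_neg (by positivity)
    _ = 2 ^ (a + 1 + -(2 * E)) := by
        rw [Real.rpow_add two_pos (a + 1), Real.rpow_add two_pos a, Real.rpow_one]
        ring
    _ ≤ 2 ^ (-E) := Real.rpow_le_rpow_of_exponent_le one_le_two (by linarith)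

open Classical in
/-- There are constants `c₁, c₂ > 0` such that for `m ≤ k - 2log₂(1/ε) - c₁` and
`k ≥ log₂log₂ n + 2log₂(1/ε) + c₁`, a uniformly random `f : {0,1}ⁿ → {0,1}^m` is an
adaptive `(k,ε)`-ERF with probability at least `1 - 2^{-c₂·2ⁿ·ε²}`: for every adaptive
adversary `A` (a decision tree reading at most `n-k` bits),
`Δ((A(U_n), f(U_n)), (A(U_n), U_m)) ≤ ε`, where the distance is the supremum over
events and probabilities are over uniform `(w, u)`. -/
theorem random_function_is_adaptiveERF :
    ∃ c1 : ℝ, 0 < c1 ∧ ∃ c2 : ℝ, 0 < c2 ∧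
      ∀ (n k m : ℕ) (ε : ℝ), 1 ≤ k → k ≤ n → 0 < ε →
        (m : ℝ) ≤ k - 2 * Real.logb 2 (1 / ε) - c1 →
        Real.logb 2 (Real.logb 2 n) + 2 * Real.logb 2 (1 / ε) + c1 ≤ k →
        1 - (2 : ℝ) ^ (-(c2 * 2 ^ n * ε ^ 2)) ≤
          ((Finset.univ.filter fun f : (Fin n → Bool) → (Fin m → Bool) =>
              ∀ T : DTree n (List Bool), T.depth ≤ n - k →
                (⨆ T' : Set (List Bool × (Fin m → Bool)),
                    |((Finset.univ.filter fun wu : (Fin n → Bool) × (Fin m → Bool) =>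
                          (T.eval wu.1, f wu.1) ∈ T').card : ℝ) / 2 ^ (n + m)
                      - ((Finset.univ.filter fun wu : (Fin n → Bool) × (Fin m → Bool) =>
                          (T.eval wu.1, wu.2) ∈ T').card : ℝ) / 2 ^ (n + m)|) ≤ ε).card : ℝ)
            / Fintype.card ((Fin n → Bool) → (Fin m → Bool)) := by
  refine ⟨3, by norm_num, 1, one_pos, fun n k m ε hk1 hkn hε hm hk => ?_⟩
  rw [← measureReal_uniformOn_univ]
  have hexponent : -2 * (ε * 2 ^ n) ^ 2 / (Fintype.card (Fin n → Bool) : ℝ)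
      = -(2 * (2 ^ n * ε ^ 2)) := by
    simp only [Fintype.card_fun, Fintype.card_bool, Fintype.card_fin, Nat.cast_pow,
      Nat.cast_ofNat]
    field_simp
  calc 1 - (2 : ℝ) ^ (-(1 * 2 ^ n * ε ^ 2))
      ≤ 1 - #(transcriptTests n m (n - k))
          * (2 * exp (-2 * (ε * 2 ^ n) ^ 2 / Fintype.card (Fin n → Bool))) := by
        rw [hexponent, one_mul]
        linarith [card_transcriptTests_mul_two_exp_le hk1 hkn hε hm hk]
    _ ≤ (uniformOn Set.univ).real {f | ∀ p ∈ transcriptTests n m (n - k),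
          |deviation (fun w y => (p.1.transcript w, y) ∈ p.2) f| ≤ ε * 2 ^ n} :=
        one_sub_card_mul_le_measureReal_forall_abs_deviation_le _ _ (by positivity)
    _ ≤ _ := measureReal_mono fun f hf T hT =>
        iSup_advantage_le_of_forall_abs_deviation_le hε.le hf T hT
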